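/- arXiv:2004.08689 — 2 statements merged into one kernel-verified Lean document; each statement's English description precedes it below -/
import Mathlib

section
/- Let u, ũ, û, ũ̂ be complex numbers and γ₁, γ₂ nonzero complex constants, and suppose all four differences u−ũ, u−û, ũ−ũ̂, û−ũ̂ are nonzero. Define the 2×2 matrices D^(γ)(λ,b) = [[λ, γb],[γ b⁻¹, λ]] and set b' = γ₁/(u−ũ), b'' = γ₂/(u−û), b̂' = γ₁/(û−ũ̂), b̃'' = γ₂/(ũ−ũ̂). Then D^(γ₁)(λ,b̂')·D^(γ₂)(λ,b'') − D^(γ₂)(λ,b̃'')·D^(γ₁)(λ,b') = (Ξ/Υ)·[[(u−ũ)(u−û), λ(ũ̂−ũ−û+u)],[0, −(ũ−ũ̂)(û−ũ̂)]], where Ξ = γ₁²(u−û)(ũ−ũ̂) − γ₂²(u−ũ)(û−ũ̂) and Υ = (u−ũ)(u−û)(ũ−ũ̂)(û−ũ̂). In particular, the discrete zero-curvature equation D̂^(γ₁)D^(γ₂) = D̃^(γ₂)D^(γ₁) holds for all λ if and only if Ξ = 0. -/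
/-- Darboux matrix `D^(γ)(λ,b)`. -/
noncomputable def Dmat (γ lam b : ℂ) : Matrix (Fin 2) (Fin 2) ℂ := !![lam, γ * b; γ * b⁻¹, lam]

theorem Dmat_div (lam x : ℂ) {γ : ℂ} (hγ : γ ≠ 0) :
    Dmat γ lam (γ / x) = !![lam, γ ^ 2 / x; x, lam] := by
  rw [Dmat, inv_div, mul_div_cancel₀ x hγ, ← mul_div_assoc, sq]

/-- In the lattice application `a = û - ũ̂`, `p = u - û`, `q = ũ - ũ̂`, `r = u - ũ`,
so that `a + p = q + r` holds automatically. -/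
theorem darboux_mul_sub_mul {K : Type*} [Field K] (l s t : K) {a p q r : K}
    (ha : a ≠ 0) (hp : p ≠ 0) (hq : q ≠ 0) (hr : r ≠ 0) (hrel : a + p = q + r) :
    !![l, s / a; a, l] * !![l, t / p; p, l] - !![l, t / q; q, l] * !![l, s / r; r, l]
      = ((s * p * q - t * r * a) / (r * p * q * a)) • !![r * p, l * (r - a); 0, -(q * a)] := by
  have hq' : q = a + p - r := by rw [hrel]; ring
  subst hq'
  ext i j
  fin_cases i <;> fin_cases j <;>
    simp only [Matrix.sub_apply, Matrix.mul_apply, Matrix.smul_apply, Fin.sum_univ_two,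
      Matrix.of_apply, Matrix.cons_val', Matrix.cons_val_zero, Matrix.cons_val_one,
      Matrix.empty_val', Matrix.cons_val_fin_one, smul_eq_mul, Fin.zero_eta, Fin.mk_one] <;>
    field_simp <;> ring

theorem eq_iff_of_sub_eq_smul {K V : Type*} [DivisionRing K] [AddCommGroup V] [Module K V]
    {x y v : V} {c : K} (h : x - y = c • v) (hv : v ≠ 0) :
    x = y ↔ c = 0 := by
  rw [← sub_eq_zero, h, smul_eq_zero, or_iff_left hv]

/-- Lemma 1.1: the Lax pair identity for the lattice SKdV equation. -/
theorem lSKdV_lax_pair (u ut uh uth γ1 γ2 : ℂ)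
    (hγ1 : γ1 ≠ 0) (hγ2 : γ2 ≠ 0)
    (h1 : u - ut ≠ 0) (h2 : u - uh ≠ 0) (h3 : ut - uth ≠ 0) (h4 : uh - uth ≠ 0) :
    (∀ lam : ℂ,
      Dmat γ1 lam (γ1 / (uh - uth)) * Dmat γ2 lam (γ2 / (u - uh))
        - Dmat γ2 lam (γ2 / (ut - uth)) * Dmat γ1 lam (γ1 / (u - ut))
      = ((γ1 ^ 2 * (u - uh) * (ut - uth) - γ2 ^ 2 * (u - ut) * (uh - uth))
          / ((u - ut) * (u - uh) * (ut - uth) * (uh - uth)))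
        • !![(u - ut) * (u - uh), lam * (uth - ut - uh + u);
             0, -((ut - uth) * (uh - uth))])
    ∧ ((∀ lam : ℂ,
        Dmat γ1 lam (γ1 / (uh - uth)) * Dmat γ2 lam (γ2 / (u - uh))
          = Dmat γ2 lam (γ2 / (ut - uth)) * Dmat γ1 lam (γ1 / (u - ut)))
        ↔ γ1 ^ 2 * (u - uh) * (ut - uth) - γ2 ^ 2 * (u - ut) * (uh - uth) = 0) := by
  have lax (lam : ℂ) := darboux_mul_sub_mul lam (γ1 ^ 2) (γ2 ^ 2) h4 h2 h3 h1 (by ring)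
  have hΥ : (u - ut) * (u - uh) * (ut - uth) * (uh - uth) ≠ 0 := by positivity
  have zero_curvature_iff (lam : ℂ) := eq_iff_of_sub_eq_smul (lax lam) fun hM ↦
    mul_ne_zero h1 h2 (by simpa using congrFun (congrFun hM 0) 0)
  simp only [Dmat_div _ _ hγ1, Dmat_div _ _ hγ2,
    show uth - ut - uh + u = (u - ut) - (uh - uth) by ring]
  refine ⟨lax, ?_⟩
  simp only [zero_curvature_iff, div_eq_zero_iff, hΥ, or_false, forall_const]
end

section
/- With the same setup as Lemma 3.1 (the map (p̃_j, q̃_j)ᵀ = (α_j²−γ²)^{−1/2} D^(γ)(α_j,b)(p_j,q_j)ᵀ), one has the scalar identity γ b⁻¹ + ⟨p̃,q̃⟩ − ⟨p,q⟩ = −γ b⁻¹ · P^(γ)(b;p,q), where ⟨ξ,η⟩ = Σ_{j=1}^N ξ_jη_j and P^(γ)(b;p,q) = b²L²¹(γ) + 2bL¹¹(γ) − L¹²(γ). In particular, if P^(γ)(b;p,q) = 0 then b = γ/(⟨p,q⟩ − ⟨p̃,q̃⟩). -/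
open Finset

/-- Quadratic form `Q_γ(ξ,η) = Σ_j ξ_j η_j / (γ² − α_j²)`. -/
noncomputable def Qlam {N : ℕ} (α : Fin N → ℝ) (lam : ℝ) (ξ η : Fin N → ℝ) : ℝ :=
  ∑ j, ξ j * η j / (lam ^ 2 - (α j) ^ 2)

/-- Lax matrix `L(λ;p,q)` of Eq. (2.1). -/
noncomputable def Lax {N : ℕ} (α : Fin N → ℝ) (lam : ℝ) (p q : Fin N → ℝ) :
    Matrix (Fin 2) (Fin 2) ℝ :=
  !![lam * Qlam α lam p q, 1 - Qlam α lam (fun j => α j * p j) p;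
     Qlam α lam (fun j => α j * q j) q, -(lam * Qlam α lam p q)]

/-! The map `(p_j, q_j) ↦ (p̃_j, q̃_j)` changes `p_j q_j` by `−γb⁻¹` times the `j`-th summand
of `b² L²¹ + 2b L¹¹ + (1 − L¹²)`; summing over `j`, the constant `1` produces the term `γb⁻¹`. -/

lemma inv_sqrt_mul_inv_sqrt_mul {d : ℝ} (hd : 0 ≤ d) (u v : ℝ) :
    (√d)⁻¹ * u * ((√d)⁻¹ * v) = u * v / d := by
  calc (√d)⁻¹ * u * ((√d)⁻¹ * v) = u * v / √d ^ 2 := by ring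
    _ = u * v / d := by rw [Real.sq_sqrt hd]

lemma dressing_mul_sub_mul {a γ b : ℝ} (hd : 0 < a ^ 2 - γ ^ 2) (hb : b ≠ 0) (x y : ℝ) :
    (√(a ^ 2 - γ ^ 2))⁻¹ * (a * x + γ * b * y) * ((√(a ^ 2 - γ ^ 2))⁻¹ * (γ * b⁻¹ * x + a * y))
      - x * y
      = -(γ * b⁻¹) * ((b ^ 2 * (a * y * y) + 2 * b * (γ * (x * y)) + a * x * x) / (γ ^ 2 - a ^ 2)) := by
  have hd' : γ ^ 2 - a ^ 2 ≠ 0 := by linarith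
  rw [inv_sqrt_mul_inv_sqrt_mul hd.le]
  field_simp [hd.ne']
  ring

lemma lax_combination_eq_sum {N : ℕ} (α : Fin N → ℝ) (γ : ℝ) (p q : Fin N → ℝ) (b : ℝ) :
    b ^ 2 * Lax α γ p q 1 0 + 2 * b * Lax α γ p q 0 0 - Lax α γ p q 0 1
      = (∑ j, (b ^ 2 * (α j * q j * q j) + 2 * b * (γ * (p j * q j)) + α j * p j * p j)
          / (γ ^ 2 - α j ^ 2)) - 1 := by
  simp only [Lax, Qlam, Matrix.of_apply, Matrix.cons_val', Matrix.cons_val_zero,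
    Matrix.cons_val_one, Matrix.empty_val', Matrix.cons_val_fin_one, add_div, mul_div_assoc,
    sum_add_distrib, mul_sum]
  ring

theorem eq34_scalar_identity_general {N : ℕ} (α : Fin N → ℝ)
    (γ : ℝ) (hγ0 : γ ≠ 0)
    (hpos : ∀ j, (α j) ^ 2 - γ ^ 2 > 0)
    (p q : Fin N → ℝ) (b : ℝ) (hb : b ≠ 0) :
    let pt : Fin N → ℝ := fun j => (Real.sqrt ((α j) ^ 2 - γ ^ 2))⁻¹ * (α j * p j + γ * b * q j)
    let qt : Fin N → ℝ := fun j => (Real.sqrt ((α j) ^ 2 - γ ^ 2))⁻¹ * (γ * b⁻¹ * p j + α j * q j)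
    let P : ℝ := b ^ 2 * Lax α γ p q 1 0 + 2 * b * Lax α γ p q 0 0 - Lax α γ p q 0 1
    γ * b⁻¹ + (∑ j, pt j * qt j) - (∑ j, p j * q j) = -(γ * b⁻¹) * P
    ∧ (P = 0 → b = γ / ((∑ j, p j * q j) - ∑ j, pt j * qt j)) := by
  intro pt qt P
  have hsum : (∑ j, pt j * qt j) - ∑ j, p j * q j = -(γ * b⁻¹) * (P + 1) := by
    have hP : P = _ := lax_combination_eq_sum α γ p q b
    rw [← sum_sub_distrib, hP, sub_add_cancel, mul_sum]
    exact sum_congr rfl fun j _ => dressing_mul_sub_mul (hpos j) hb (p j) (q j)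
  have hmain : γ * b⁻¹ + (∑ j, pt j * qt j) - (∑ j, p j * q j) = -(γ * b⁻¹) * P := by
    linear_combination hsum
  refine ⟨hmain, fun hP => ?_⟩
  have hdiff : (∑ j, p j * q j) - ∑ j, pt j * qt j = γ * b⁻¹ := by
    linear_combination -hmain + (γ * b⁻¹) * hP
  rw [hdiff]
  field_simp

/-- Eq. (3.4): the scalar identity `γb⁻¹ + ⟨p̃,q̃⟩ − ⟨p,q⟩ = −γb⁻¹ P^(γ)(b;p,q)`,
and in particular `b = γ/(⟨p,q⟩ − ⟨p̃,q̃⟩)` when `P^(γ)(b;p,q) = 0`. -/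
theorem eq34_scalar_identity {N : ℕ} (α : Fin N → ℝ) (hα : ∀ j, α j ≠ 0)
    (hαdist : ∀ j k, (α j) ^ 2 = (α k) ^ 2 → j = k)
    (γ : ℝ) (hγ0 : γ ≠ 0) (hγ : ∀ j, γ ^ 2 ≠ (α j) ^ 2)
    (hpos : ∀ j, (α j) ^ 2 - γ ^ 2 > 0)
    (p q : Fin N → ℝ) (b : ℝ) (hb : b ≠ 0) :
    let pt : Fin N → ℝ := fun j => (Real.sqrt ((α j) ^ 2 - γ ^ 2))⁻¹ * (α j * p j + γ * b * q j)
    let qt : Fin N → ℝ := fun j => (Real.sqrt ((α j) ^ 2 - γ ^ 2))⁻¹ * (γ * b⁻¹ * p j + α j * q j)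
    let P : ℝ := b ^ 2 * Lax α γ p q 1 0 + 2 * b * Lax α γ p q 0 0 - Lax α γ p q 0 1
    γ * b⁻¹ + (∑ j, pt j * qt j) - (∑ j, p j * q j) = -(γ * b⁻¹) * P
    ∧ (P = 0 → b = γ / ((∑ j, p j * q j) - ∑ j, pt j * qt j)) :=
  eq34_scalar_identity_general α γ hγ0 hpos p q b hb
end
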